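/- For each N ≥ 2 let F_N be an isotropic random continuous field on S^N. Assume there exists α > 0 such that: (1) for every c, δ > 0 there exist c₁ > 0 and C₁ > 0 with P( |F_N(𝐧) − E[F_N(𝐧)]| ≥ c·N^{1/2+δ} ) ≤ C₁·exp(−c₁·N^{1+2δ}) for all N; and (2) for every c, δ > 0 there exist c₂ > 0 and C₂ > 0 with P( sup{ |F_N(x) − F_N(y)| : x, y ∈ S^N, R(x,y) ≥ 1 − N^{−α} } ≥ c·N^{1/2+δ} ) ≤ C₂·exp(−c₂·N^{1+2δ}) for all N. Then for every c, δ > 0 there exist f > 0 and C > 0 such that for all N, P( sup_{x ∈ S^N} |F_N(x) − E[F_N(𝐧)]| ≥ c·N^{1/2+δ} ) ≤ C·exp(−f·N^{1+2δ}). -/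

import Mathlib

/-!
Cover `S^N` by a finite set `T` of points such that every `x` has overlap at least `1 - N^{-α}`
with some `t ∈ T`. On `S^N` overlap and distance are related by `|x - y|² = 2N (1 - R(x, y))`, so
this is a covering at scale `√(2 N^{1-α})`, and a volume packing argument gives
`|T| ≤ (3 N^α)^N = exp (O(N log N))`.
If `sup_x |F(x) - E F(𝐧)| ≥ c N^{1/2+δ}`, then either `|F(t) - E F(𝐧)| ≥ (c/2) N^{1/2+δ}` for some
`t ∈ T`, or two points with overlap `≥ 1 - N^{-α}` differ by at least `(c/2) N^{1/2+δ}`.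
By isotropy each `F(t)` has the law of `F(𝐧)`, so a union bound gives the probability bound
`|T| C₁ exp (-c₁ N^{1+2δ}) + C₂ exp (-c₂ N^{1+2δ})`, and `N log N = o(N^{1+2δ})` lets the
factor `|T|` be absorbed into half of the exponent. Small `N` are absorbed into the constant.
-/

open MeasureTheory

/-- The sphere `S^N` of radius `√N` in `ℝ^N`. -/
noncomputable def sphereN (N : ℕ) : Set (EuclideanSpace ℝ (Fin N)) :=
  Metric.sphere (0 : EuclideanSpace ℝ (Fin N)) (Real.sqrt N)

/-- The north pole `𝐧 = (√N, 0, …, 0) ∈ S^N`. -/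
noncomputable def nPole (N : ℕ) (hN : 0 < N) : sphereN N :=
  ⟨EuclideanSpace.single (⟨0, hN⟩ : Fin N) (Real.sqrt N), by
    simp [sphereN, mem_sphere_iff_norm, EuclideanSpace.norm_single,
      abs_of_nonneg (Real.sqrt_nonneg (N : ℝ))]⟩

/-- A linear isometry (in particular, an orthogonal map) of `ℝ^N` restricted to the
sphere `S^N`. -/
noncomputable def sphereMap {N : ℕ}
    (O : EuclideanSpace ℝ (Fin N) ≃ₗᵢ[ℝ] EuclideanSpace ℝ (Fin N)) (x : sphereN N) :
    sphereN N :=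
  ⟨O x, by
    have hx : ‖(x : EuclideanSpace ℝ (Fin N))‖ = Real.sqrt N := by
      simpa [sphereN, mem_sphere_iff_norm] using x.2
    simp [sphereN, mem_sphere_iff_norm, O.norm_map, hx]⟩

/-- The overlap `R(x,y) = (1/N) Σᵢ xᵢ yᵢ` of two points of `S^N`. -/
noncomputable def overlap {N : ℕ} (x y : sphereN N) : ℝ :=
  (inner ℝ (x : EuclideanSpace ℝ (Fin N)) (y : EuclideanSpace ℝ (Fin N)) : ℝ) / N

open Metric Filter Real
open scoped ENNReal NNReal

section Packing

variable {E : Type*} [NormedAddCommGroup E] [NormedSpace ℝ E] [FiniteDimensional ℝ E]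

theorem Metric.IsSeparated.card_le_of_subset_closedBall {C : Finset E} {ε : ℝ≥0} (hε : 0 < ε)
    {x : E} {R : ℝ} (hR : 0 ≤ R) (hCR : (C : Set E) ⊆ closedBall x R)
    (hC : IsSeparated ε (C : Set E)) :
    (C.card : ℝ) ≤ ((R + ε / 2) / (ε / 2)) ^ Module.finrank ℝ E := by
  borelize E
  set μ : Measure E := Measure.addHaar
  set n := Module.finrank ℝ E
  have hε2 : (0 : ℝ) < ε / 2 := by positivity
  have hdisj : (C : Set E).PairwiseDisjoint fun c => ball c (ε / 2) := by
    intro c hc d hd hcd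
    refine ball_disjoint_ball ?_
    have hcd := (hC hc hd hcd).le
    rwa [edist_dist, ← ENNReal.ofReal_coe_nnreal, ENNReal.ofReal_le_ofReal_iff dist_nonneg,
      ← add_halves (ε : ℝ)] at hcd
  have hsub : (⋃ c ∈ C, ball c (ε / 2)) ⊆ ball x (R + ε / 2) :=
    Set.iUnion₂_subset fun c hc => ball_subset_ball' (by linarith [mem_closedBall.1 (hCR hc)])
  have hvol : (C.card : ℝ≥0∞) * ENNReal.ofReal ((ε / 2) ^ n) * μ (ball 0 1) ≤
      ENNReal.ofReal ((R + ε / 2) ^ n) * μ (ball 0 1) :=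
    calc (C.card : ℝ≥0∞) * ENNReal.ofReal ((ε / 2) ^ n) * μ (ball 0 1)
        = μ (⋃ c ∈ C, ball c (ε / 2)) := by
          rw [measure_biUnion_finset hdisj fun c _ => measurableSet_ball]
          simp only [μ.addHaar_ball_of_pos _ hε2, Finset.sum_const, nsmul_eq_mul, mul_assoc, n]
      _ ≤ μ (ball x (R + ε / 2)) := measure_mono hsub
      _ = ENNReal.ofReal ((R + ε / 2) ^ n) * μ (ball 0 1) := μ.addHaar_ball_of_pos _ (by positivity)
  have hvol' := ENNReal.toReal_le_of_le_ofReal (by positivity)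
    ((ENNReal.mul_le_mul_iff_left (measure_ball_pos μ _ one_pos).ne' measure_ball_lt_top.ne).1 hvol)
  rw [ENNReal.toReal_mul, ENNReal.toReal_natCast, ENNReal.toReal_ofReal (by positivity)] at hvol'
  rwa [div_pow, le_div_iff₀ (by positivity)]

theorem Metric.packingNumber_le_of_subset_closedBall {A : Set E} {ε : ℝ≥0} (hε : 0 < ε) {x : E} {R : ℝ}
    (hR : 0 ≤ R) (hA : A ⊆ closedBall x R) :
    packingNumber ε A ≤ ⌊((R + ε / 2) / (ε / 2)) ^ Module.finrank ℝ E⌋₊ := by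
  set K := ((R + ε / 2) / (ε / 2)) ^ Module.finrank ℝ E
  refine iSup₂_le fun C hCA => iSup_le fun hC => ?_
  by_contra! hlt
  obtain ⟨D, hDC, hDcard⟩ := Set.exists_subset_encard_eq (Order.add_one_le_of_lt hlt)
  have hDfin : D.Finite := Set.finite_of_encard_eq_coe hDcard
  have hcard : hDfin.toFinset.card = ⌊K⌋₊ + 1 := by
    rw [← ENat.natCast_inj, ← hDfin.encard_eq_coe_toFinset_card, hDcard, Nat.cast_add_one]
  have hsep := IsSeparated.card_le_of_subset_closedBall (C := hDfin.toFinset) hε hR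
    (by simpa using (hDC.trans hCA).trans hA) (by simpa using hC.subset hDC)
  rw [hcard, Nat.cast_add_one] at hsep
  exact (Nat.lt_floor_add_one K).not_ge hsep

end Packing

section Sphere

variable {N : ℕ}

theorem norm_coe_sphereN (x : sphereN N) : ‖(x : EuclideanSpace ℝ (Fin N))‖ = √N :=
  mem_sphere_zero_iff_norm.1 x.2

instance : CompactSpace (sphereN N) :=
  isCompact_iff_compactSpace.1 (isCompact_sphere _ _)

instance : Nonempty (sphereN N) :=
  ⟨⟨WithLp.toLp 2 fun _ => 1, by simp [sphereN, EuclideanSpace.norm_eq]⟩⟩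

theorem overlap_eq_one_sub_dist_sq (hN : N ≠ 0) (x y : sphereN N) :
    overlap x y = 1 - dist x y ^ 2 / (2 * N) := by
  have hN' : (N : ℝ) ≠ 0 := Nat.cast_ne_zero.2 hN
  have hnorm := norm_sub_sq_real (x : EuclideanSpace ℝ (Fin N)) y
  rw [norm_coe_sphereN, norm_coe_sphereN, Real.sq_sqrt (Nat.cast_nonneg N)] at hnorm
  rw [overlap, Subtype.dist_eq, dist_eq_norm, hnorm]
  field_simp
  ring

theorem one_sub_le_overlap_of_dist_le (hN : N ≠ 0) {ε : ℝ} (hε : 0 ≤ ε) {x y : sphereN N}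
    (h : dist x y ≤ √(2 * N * ε)) : 1 - ε ≤ overlap x y := by
  have hd := pow_le_pow_left₀ dist_nonneg h 2
  rw [Real.sq_sqrt (by positivity)] at hd
  rw [overlap_eq_one_sub_dist_sq hN, sub_le_sub_iff_left, div_le_iff₀ (by positivity)]
  linarith

theorem exists_finset_one_sub_le_overlap (hN : N ≠ 0) {ε : ℝ} (hε : 0 < ε) :
    ∃ T : Finset (sphereN N), (∀ x, ∃ t ∈ T, 1 - ε ≤ overlap x t) ∧
      (T.card : ℝ) ≤ (1 + √(2 / ε)) ^ N := by
  have hr : 0 < √(2 * N * ε) := Real.sqrt_pos.2 (by positivity)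
  set r : ℝ≥0 := ⟨√(2 * N * ε), hr.le⟩
  set K := ((√N + r / 2) / (r / 2)) ^ Module.finrank ℝ (EuclideanSpace ℝ (Fin N))
  have hcov : coveringNumber r (Set.univ : Set (sphereN N)) ≤ ⌊K⌋₊ := by
    rw [← isometry_subtype_coe.coveringNumber_image, Set.image_univ, Subtype.range_coe]
    exact (coveringNumber_le_packingNumber _ _).trans
      (packingNumber_le_of_subset_closedBall (show 0 < r from hr) (Real.sqrt_nonneg _)
        sphere_subset_closedBall)
  have hcov' : coveringNumber r (Set.univ : Set (sphereN N)) ≠ ⊤ :=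
    ne_top_of_le_ne_top (ENat.natCast_ne_top _) hcov
  have hfin : (minimalCover r (Set.univ : Set (sphereN N))).Finite := finite_minimalCover
  refine ⟨hfin.toFinset, fun x => ?_, ?_⟩
  · obtain ⟨t, ht, hxt⟩ := isCover_minimalCover hcov' (Set.mem_univ x)
    refine ⟨t, Set.Finite.mem_toFinset _ |>.2 ht, one_sub_le_overlap_of_dist_le hN hε.le ?_⟩
    change edist x t ≤ r at hxt
    rwa [edist_le_coe, ← NNReal.coe_le_coe, coe_nndist] at hxt
  · have hcard : hfin.toFinset.card ≤ ⌊K⌋₊ := by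
      rw [← ENat.natCast_le_natCast, ← hfin.encard_eq_coe_toFinset_card,
        encard_minimalCover hcov']
      exact hcov
    have hprod : √(2 * N * ε) * √(2 / ε) = 2 * √N := by
      rw [← Real.sqrt_mul (by positivity), show 2 * N * ε * (2 / ε) = 2 ^ 2 * N by field_simp,
        Real.sqrt_mul (by positivity), Real.sqrt_sq zero_le_two]
    have hK : K = (1 + √(2 / ε)) ^ N := by
      change ((√N + √(2 * N * ε) / 2) / (√(2 * N * ε) / 2)) ^ _ = _
      rw [finrank_euclideanSpace_fin]
      congr 1
      field_simp
      linarith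
    calc (hfin.toFinset.card : ℝ) ≤ ⌊K⌋₊ := by exact_mod_cast hcard
      _ ≤ K := Nat.floor_le (by positivity)
      _ = (1 + √(2 / ε)) ^ N := hK

end Sphere

theorem one_add_sqrt_two_div_le {ε : ℝ} (hε : 0 < ε) (hε1 : ε ≤ 1) : 1 + √(2 / ε) ≤ 3 / ε := by
  have h1 : 1 ≤ 1 / ε := one_le_one_div hε hε1
  have h2 : 1 ≤ 2 / ε := by rw [le_div_iff₀ hε]; linarith
  have hsqrt : √(2 / ε) ≤ 2 / ε := (Real.sqrt_le_left (by positivity)).2 (by nlinarith)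
  linarith [show 3 / ε = 1 / ε + 2 / ε by ring]

theorem eventually_three_mul_rpow_pow_le_exp (α : ℝ) {κ δ : ℝ} (hκ : 0 < κ) (hδ : 0 < δ) :
    ∀ᶠ N : ℕ in atTop, (3 * (N : ℝ) ^ α) ^ N ≤ exp (κ * N ^ (1 + 2 * δ)) := by
  have h2δ : 0 < 2 * δ := by positivity
  have hlog : (fun x => log 3 + α * log x) =o[atTop] fun x => x ^ (2 * δ) :=
    (Asymptotics.isLittleO_const_left.2 <| .inr <|
      tendsto_norm_atTop_atTop.comp (tendsto_rpow_atTop h2δ)).add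
      ((isLittleO_log_rpow_atTop h2δ).const_mul_left α)
  filter_upwards [tendsto_natCast_atTop_atTop.eventually (hlog.def hκ), eventually_ge_atTop 1]
    with N hlogN hN1
  have hN0 : (0 : ℝ) < N := by exact_mod_cast hN1
  rw [Real.norm_eq_abs, Real.norm_of_nonneg (by positivity)] at hlogN
  rw [← exp_log (by positivity : 0 < 3 * (N : ℝ) ^ α), ← exp_nat_mul, exp_le_exp,
    log_mul (by norm_num) (by positivity), log_rpow hN0, rpow_add hN0, rpow_one]
  nlinarith [le_abs_self (log 3 + α * log N)]

theorem eventually_exists_finset_card_le_exp {α κ δ : ℝ} (hα : 0 < α) (hκ : 0 < κ) (hδ : 0 < δ) :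
    ∀ᶠ N : ℕ in atTop, ∃ T : Finset (sphereN N),
      (∀ x, ∃ t ∈ T, 1 - (N : ℝ) ^ (-α) ≤ overlap x t) ∧
        (T.card : ℝ) ≤ exp (κ * N ^ (1 + 2 * δ)) := by
  filter_upwards [eventually_three_mul_rpow_pow_le_exp α hκ hδ, eventually_ge_atTop 1]
    with N hexp hN
  have hN1 : (1 : ℝ) ≤ N := by exact_mod_cast hN
  have hε : 0 < (N : ℝ) ^ (-α) := by positivity
  have hε1 : (N : ℝ) ^ (-α) ≤ 1 := rpow_le_one_of_one_le_of_nonpos hN1 (by linarith)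
  obtain ⟨T, hT, hcard⟩ := exists_finset_one_sub_le_overlap (Nat.one_le_iff_ne_zero.1 hN) hε
  refine ⟨T, hT, ?_⟩
  calc (T.card : ℝ) ≤ (1 + √(2 / (N : ℝ) ^ (-α))) ^ N := hcard
    _ ≤ (3 / (N : ℝ) ^ (-α)) ^ N :=
      pow_le_pow_left₀ (by positivity) (one_add_sqrt_two_div_le hε hε1) N
    _ = (3 * (N : ℝ) ^ α) ^ N := by rw [rpow_neg (by positivity), div_inv_eq_mul]
    _ ≤ exp (κ * N ^ (1 + 2 * δ)) := hexp

noncomputable def overlapModulus {N : ℕ} (f : sphereN N → ℝ) (ε : ℝ) : ℝ :=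
  sSup {r : ℝ | ∃ x y : sphereN N, 1 - ε ≤ overlap x y ∧ r = |f x - f y|}

section IsotropicField

variable {N : ℕ}

theorem abs_sub_le_overlapModulus {f : sphereN N → ℝ} (hf : Continuous f) {ε : ℝ}
    {x y : sphereN N} (h : 1 - ε ≤ overlap x y) : |f x - f y| ≤ overlapModulus f ε := by
  have hbdd : BddAbove (Set.range fun p : sphereN N × sphereN N => |f p.1 - f p.2|) :=
    (isCompact_range (by fun_prop)).bddAbove
  refine le_csSup (hbdd.mono ?_) ⟨x, y, h, rfl⟩
  rintro r ⟨x, y, -, rfl⟩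
  exact ⟨(x, y), rfl⟩

theorem exists_le_abs_sub_or_le_overlapModulus {f : sphereN N → ℝ} (hf : Continuous f)
    {ε : ℝ} {T : Finset (sphereN N)} (hT : ∀ x, ∃ t ∈ T, 1 - ε ≤ overlap x t) {E a b : ℝ}
    (h : a + b ≤ ⨆ x, |f x - E|) : (∃ t ∈ T, a ≤ |f t - E|) ∨ b ≤ overlapModulus f ε := by
  obtain ⟨x₀, -, hx₀⟩ := isCompact_univ.exists_isMaxOn Set.univ_nonempty
    (hf.sub continuous_const).abs.continuousOn
  have hsup : ⨆ x, |f x - E| ≤ |f x₀ - E| := ciSup_le fun x => hx₀ (Set.mem_univ x)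
  obtain ⟨t, ht, hov⟩ := hT x₀
  by_contra! hne
  linarith [hne.1 t ht, hne.2, abs_sub_le (f x₀) (f t) E, abs_sub_le_overlapModulus hf hov]

variable {Ω : Type*} [MeasurableSpace Ω] {μ : Measure Ω} {F : Ω → sphereN N → ℝ}

theorem map_eval_eq_of_isotropic (hF : Measurable F)
    (hiso : ∀ O : EuclideanSpace ℝ (Fin N) ≃ₗᵢ[ℝ] EuclideanSpace ℝ (Fin N),
      μ.map (fun ω x => F ω (sphereMap O x)) = μ.map F) (x y : sphereN N) :
    μ.map (fun ω => F ω x) = μ.map (fun ω => F ω y) := by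
  set O := (ℝ ∙ ((y : EuclideanSpace ℝ (Fin N)) - x))ᗮ.reflection
  have hO : sphereMap O y = x :=
    Subtype.ext (Submodule.reflection_sub (by rw [norm_coe_sphereN, norm_coe_sphereN]))
  have hG : Measurable fun ω z => F ω (sphereMap O z) :=
    measurable_pi_iff.2 fun z => (measurable_pi_apply _).comp hF
  calc μ.map (fun ω => F ω x)
      = (μ.map fun ω z => F ω (sphereMap O z)).map fun g => g y := by
        rw [Measure.map_map (measurable_pi_apply y) hG]
        simp only [Function.comp_def, hO]
    _ = (μ.map F).map fun g => g y := by rw [hiso O]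
    _ = μ.map (fun ω => F ω y) := Measure.map_map (measurable_pi_apply y) hF

theorem measure_le_card_mul_add_measure_overlapModulus (hcont : ∀ ω, Continuous (F ω))
    (hF : Measurable F)
    (hiso : ∀ O : EuclideanSpace ℝ (Fin N) ≃ₗᵢ[ℝ] EuclideanSpace ℝ (Fin N),
      μ.map (fun ω x => F ω (sphereMap O x)) = μ.map F)
    {ε : ℝ} {T : Finset (sphereN N)} (hT : ∀ x, ∃ t ∈ T, 1 - ε ≤ overlap x t)
    (x₀ : sphereN N) (E a b : ℝ) :
    μ {ω | a + b ≤ ⨆ x, |F ω x - E|} ≤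
      T.card * μ {ω | a ≤ |F ω x₀ - E|} + μ {ω | b ≤ overlapModulus (F ω) ε} := by
  have hS : MeasurableSet {z : ℝ | a ≤ |z - E|} :=
    measurableSet_le measurable_const (measurable_id.sub_const E).abs
  have hpt (t : sphereN N) : μ {ω | a ≤ |F ω t - E|} = μ {ω | a ≤ |F ω x₀ - E|} := by
    have := congrArg (· {z : ℝ | a ≤ |z - E|}) (map_eval_eq_of_isotropic hF hiso t x₀)
    rwa [Measure.map_apply (measurable_pi_iff.1 hF t) hS,
      Measure.map_apply (measurable_pi_iff.1 hF x₀) hS] at this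
  calc μ {ω | a + b ≤ ⨆ x, |F ω x - E|}
      ≤ μ ((⋃ t ∈ T, {ω | a ≤ |F ω t - E|}) ∪ {ω | b ≤ overlapModulus (F ω) ε}) := by
        refine measure_mono fun ω hω => ?_
        rcases exists_le_abs_sub_or_le_overlapModulus (hcont ω) hT hω with ⟨t, ht, h⟩ | h
        exacts [Or.inl (Set.mem_biUnion ht h), Or.inr h]
    _ ≤ ∑ t ∈ T, μ {ω | a ≤ |F ω t - E|} + μ {ω | b ≤ overlapModulus (F ω) ε} :=
        (measure_union_le _ _).trans (by gcongr; exact measure_biUnion_finset_le _ _)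
    _ = T.card * μ {ω | a ≤ |F ω x₀ - E|} + μ {ω | b ≤ overlapModulus (F ω) ε} := by
        simp only [hpt, Finset.sum_const, nsmul_eq_mul]

end IsotropicField

theorem mul_add_le_mul_exp_neg {K C₁ C₂ D c₁ c₂ f x : ℝ} (hK : K ≤ exp (c₁ / 2 * x))
    (hC₁ : 0 ≤ C₁) (hC₂ : 0 ≤ C₂) (hD : 0 ≤ D) (hx : 0 ≤ x) (hf₁ : f ≤ c₁ / 2) (hf₂ : f ≤ c₂) :
    K * (C₁ * exp (-c₁ * x)) + C₂ * exp (-c₂ * x) ≤ (C₁ + C₂ + D) * exp (-f * x) := by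
  have h₁ : K * (C₁ * exp (-c₁ * x)) ≤ C₁ * exp (-f * x) :=
    calc K * (C₁ * exp (-c₁ * x)) ≤ exp (c₁ / 2 * x) * (C₁ * exp (-c₁ * x)) := by gcongr
      _ = C₁ * exp (-(c₁ / 2) * x) := by rw [mul_left_comm, ← exp_add]; ring_nf
      _ ≤ C₁ * exp (-f * x) := by gcongr
  have h₂ : C₂ * exp (-c₂ * x) ≤ C₂ * exp (-f * x) := by gcongr
  nlinarith [exp_pos (-f * x)]

theorem one_le_mul_exp_neg {C f x y : ℝ} (hC : exp (f * y) ≤ C) (hf : 0 ≤ f) (hxy : x ≤ y) :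
    1 ≤ C * exp (-f * x) :=
  calc 1 ≤ exp (f * y) * exp (-f * x) := by rw [← exp_add]; exact one_le_exp (by nlinarith)
    _ ≤ C * exp (-f * x) := by gcongr

theorem isotropic_field_uniform_concentration
    (Ω : ℕ → Type) (m : ∀ N, MeasurableSpace (Ω N)) (μ : ∀ N, Measure (Ω N))
    (hprob : ∀ N, IsProbabilityMeasure (μ N))
    (F : ∀ N, Ω N → sphereN N → ℝ)
    (hcont : ∀ N ω, Continuous (F N ω))
    (hmeas : ∀ N, Measurable (F N))
    (hiso : ∀ N (O : EuclideanSpace ℝ (Fin N) ≃ₗᵢ[ℝ] EuclideanSpace ℝ (Fin N)),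
      Measure.map (fun ω x => F N ω (sphereMap O x)) (μ N) = Measure.map (F N) (μ N))
    (α : ℝ) (hα : 0 < α)
    (hpoint : ∀ c > (0 : ℝ), ∀ δ > (0 : ℝ), ∃ c₁ > (0 : ℝ), ∃ C₁ > (0 : ℝ),
      ∀ N, ∀ hN : 2 ≤ N,
        μ N {ω | c * (N : ℝ) ^ ((1 : ℝ) / 2 + δ) ≤
            |F N ω (nPole N (by omega)) - ∫ ω', F N ω' (nPole N (by omega)) ∂μ N|}
          ≤ ENNReal.ofReal (C₁ * Real.exp (-c₁ * (N : ℝ) ^ ((1 : ℝ) + 2 * δ))))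
    (hmod : ∀ c > (0 : ℝ), ∀ δ > (0 : ℝ), ∃ c₂ > (0 : ℝ), ∃ C₂ > (0 : ℝ),
      ∀ N, 2 ≤ N →
        μ N {ω | c * (N : ℝ) ^ ((1 : ℝ) / 2 + δ) ≤
            sSup {r : ℝ | ∃ x y : sphereN N,
              1 - (N : ℝ) ^ (-α) ≤ overlap x y ∧ r = |F N ω x - F N ω y|}}
          ≤ ENNReal.ofReal (C₂ * Real.exp (-c₂ * (N : ℝ) ^ ((1 : ℝ) + 2 * δ)))) :
    ∀ c > (0 : ℝ), ∀ δ > (0 : ℝ), ∃ f > (0 : ℝ), ∃ C > (0 : ℝ),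
      ∀ N, ∀ hN : 2 ≤ N,
        μ N {ω | c * (N : ℝ) ^ ((1 : ℝ) / 2 + δ) ≤
            ⨆ x : sphereN N, |F N ω x - ∫ ω', F N ω' (nPole N (by omega)) ∂μ N|}
          ≤ ENNReal.ofReal (C * Real.exp (-f * (N : ℝ) ^ ((1 : ℝ) + 2 * δ))) := by
  intro c hc δ hδ
  obtain ⟨c₁, hc₁, C₁, hC₁, hpt⟩ := hpoint (c / 2) (half_pos hc) δ hδ
  obtain ⟨c₂, hc₂, C₂, hC₂, hmd⟩ := hmod (c / 2) (half_pos hc) δ hδ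
  obtain ⟨N₀, hnet⟩ :=
    eventually_atTop.1 (eventually_exists_finset_card_le_exp hα (half_pos hc₁) hδ)
  have hf : 0 < min (c₁ / 2) c₂ := lt_min (half_pos hc₁) hc₂
  refine ⟨min (c₁ / 2) c₂, hf, C₁ + C₂ + exp (min (c₁ / 2) c₂ * N₀ ^ ((1 : ℝ) + 2 * δ)),
    by positivity, fun N hN => ?_⟩
  have := hprob N
  rcases le_or_gt N₀ N with hN₀ | hN₀
  · obtain ⟨T, hT, hTcard⟩ := hnet N hN₀
    rw [← add_halves c, add_mul]
    refine (measure_le_card_mul_add_measure_overlapModulus (hcont N) (hmeas N) (hiso N) hT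
      (nPole N (by omega)) _ _ _).trans ?_
    refine (add_le_add (mul_le_mul_of_nonneg_left (hpt N hN) zero_le) (hmd N hN)).trans ?_
    rw [← ENNReal.ofReal_natCast, ← ENNReal.ofReal_mul (by positivity),
      ← ENNReal.ofReal_add (by positivity) (by positivity)]
    exact ENNReal.ofReal_le_ofReal (mul_add_le_mul_exp_neg hTcard hC₁.le hC₂.le (exp_pos _).le
      (by positivity) (min_le_left _ _) (min_le_right _ _))
  · refine prob_le_one.trans (ENNReal.ofReal_one ▸ ENNReal.ofReal_le_ofReal ?_)
    exact one_le_mul_exp_neg (le_add_of_nonneg_left (by positivity)) hf.le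
      (rpow_le_rpow (Nat.cast_nonneg N) (by exact_mod_cast hN₀.le) (by positivity))
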